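/- arXiv:1309.3445 — 3 statements merged into one kernel-verified Lean document; each statement's English description precedes it below -/
import Mathlib

section
/- (Monotonicity, Lemma 3.1) Let N be an abelian network with total alphabet A and total state space Q. For all words w, w' ∈ A^* and all q ∈ Q, if |w| ≤ |w'| coordinatewise in ℕ^A, then N(w,q) ≤ N(w',q) coordinatewise in ℕ^A. -/
/-- The letter-count vector `|w| ∈ ℕ^A` of a word `w ∈ A^*`. -/
def lc {A : Type*} [DecidableEq A] (w : List A) : A → ℕ := fun a => w.count a

/-- An abelian-network *data* structure on a directed graph with vertex set `V`, edge set `E`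
(with source and target maps, allowing loops and multiple edges), total alphabet
`A = ⊔_v A_v` (the letter `a` belongs to the alphabet of the vertex `loc a`), and
state space `Q v` for the processor at vertex `v`.  The abelian hypothesis on the
processors is the separate predicate `AbelianNetwork.IsAbelian`. -/
structure AbelianNetwork (V E A : Type*) (Q : V → Type*) [DecidableEq V] [DecidableEq A] where
  /-- source of an edge -/
  src : E → V
  /-- target of an edge -/
  tgt : E → V
  /-- the vertex whose input alphabet contains the letter `a` -/
  loc : A → V
  /-- the (finitely many) outgoing edges of each vertex -/
  outEdges : V → Finset E
  mem_outEdges : ∀ (e : E) (v : V), e ∈ outEdges v ↔ src e = v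
  /-- single-letter transition function `T_v(a, ·)` of the processor at `v = loc a` -/
  trans : (a : A) → Q (loc a) → Q (loc a)
  /-- message-passing function: the word sent along the edge `e` (with `src e = loc a`)
  when the processor at `loc a` processes the letter `a` in state `q` -/
  msg : (e : E) → (a : A) → Q (loc a) → List A
  /-- letters sent along `e` belong to the alphabet of the target of `e` -/
  msg_tgt : ∀ (e : E) (a : A) (q : Q (loc a)), src e = loc a → ∀ b ∈ msg e a q, loc b = tgt e

namespace AbelianNetwork

variable {V E A : Type*} {Q : V → Type*} [DecidableEq V] [DecidableEq A]
variable (N : AbelianNetwork V E A Q)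

/-- The map `t_a : Q → Q` updating the `loc a` coordinate by `T_{loc a}(a, ·)` and
fixing all other coordinates. -/
def tact (a : A) (q : ∀ v, Q v) : ∀ v, Q v :=
  Function.update q (N.loc a) (N.trans a (q (N.loc a)))

/-- `t_w = t_{w_r} ∘ ⋯ ∘ t_{w_1}` for a word `w = w_1 ⋯ w_r`. -/
def tword (w : List A) (q : ∀ v, Q v) : ∀ v, Q v :=
  w.foldl (fun q a => N.tact a q) q

/-- The word sent along the edge `e` when the letters of `w` are processed in order,
starting from the global state `q`.  (Extends the message-passing functions to words.) -/
def msgword (e : E) : List A → (∀ v, Q v) → List A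
  | [], _ => []
  | a :: w, q =>
      (if N.src e = N.loc a then N.msg e a (q (N.loc a)) else []) ++ msgword e w (N.tact a q)

/-- `N(a, q_{loc a}) ∈ ℕ^A`: the vector counting the letters produced when the processor at
`loc a` processes the letter `a`, summed over the outgoing edges of `loc a`. -/
def Nletter (a : A) (q : ∀ v, Q v) : A → ℕ := fun b =>
  ∑ e ∈ N.outEdges (N.loc a), (N.msg e a (q (N.loc a))).count b

/-- `N(w, q) = ∑_i N(w_i, q^{i-1}_{v(i)})` for a word `w = w_1 ⋯ w_r`. -/
def Nword : List A → (∀ v, Q v) → A → ℕ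
  | [], _ => fun _ => 0
  | a :: w, q => fun b => N.Nletter a q b + Nword w (N.tact a q) b

/-- The network is *abelian*: permuting a word input to a single processor does not change
the resulting state and changes each output word only by permuting its letters. -/
def IsAbelian : Prop :=
  ∀ (v : V) (w w' : List A), (∀ a ∈ w, N.loc a = v) → (∀ a ∈ w', N.loc a = v) →
    (w : Multiset A) = (w' : Multiset A) →
    ∀ q : ∀ u, Q u,
      N.tword w q = N.tword w' q ∧
      ∀ e : E, ((N.msgword e w q : Multiset A) = (N.msgword e w' q : Multiset A))

/-- The state transition `π_a(x.q) = (x - 1_a + N(a, q_{loc a})).t_a(q)` of the whole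
network, viewed as a single automaton with states `x.q ∈ ℤ^A × Q`. -/
def piLetter (a : A) (s : (A → ℤ) × (∀ v, Q v)) : (A → ℤ) × (∀ v, Q v) :=
  (fun b => s.1 b - (if b = a then 1 else 0) + (N.Nletter a s.2 b : ℤ), N.tact a s.2)

/-- `π_w = π_{w_r} ∘ ⋯ ∘ π_{w_1}`. -/
def piWord (w : List A) (s : (A → ℤ) × (∀ v, Q v)) : (A → ℤ) × (∀ v, Q v) :=
  w.foldl (fun s a => N.piLetter a s) s

/-- The word `w` is a *legal execution* from `x.q`: each letter is a legal move
(`x_a ≥ 1`) from the state obtained by executing the previous letters. -/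
def Legal : List A → ((A → ℤ) × (∀ v, Q v)) → Prop
  | [], _ => True
  | a :: w, s => 1 ≤ s.1 a ∧ Legal w (N.piLetter a s)

/-- The word `w` is a *complete execution* from `x.q`: after executing `w`,
no letters remain to be processed. -/
def Complete (w : List A) (s : (A → ℤ) × (∀ v, Q v)) : Prop :=
  ∀ a : A, (N.piWord w s).1 a ≤ 0

/-- A canonical word with letter-count vector `u ∈ ℕ^A`. -/
noncomputable def vecWord [Fintype A] (u : A → ℕ) : List A :=
  (Finset.univ : Finset A).toList.flatMap fun a => List.replicate (u a) a

/-- `N(u, q)` for a vector `u ∈ ℕ^A`, defined as `N(w, q)` for a word `w` with `|w| = u`. -/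
noncomputable def Nvec [Fintype A] (u : A → ℕ) (q : ∀ v, Q v) : A → ℕ := N.Nword (vecWord u) q


/-! Since `N(w, q)` only depends on `|w|` (an adjacent transposition of two letters at the same
vertex is covered by the abelian property, and letters at different vertices act on disjoint
coordinates of the state), we may replace `w'` by a rearrangement `w t` with `|t| = |w'| - |w|`;
then `N(w t, q) = N(w, q) + N(t, t_w q) ≥ N(w, q)`. -/

lemma tword_cons (a : A) (w : List A) (q : ∀ v, Q v) :
    N.tword (a :: w) q = N.tword w (N.tact a q) := rfl

lemma Nword_nil (q : ∀ v, Q v) : N.Nword [] q = 0 := rfl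

lemma Nword_cons (a : A) (w : List A) (q : ∀ v, Q v) :
    N.Nword (a :: w) q = N.Nletter a q + N.Nword w (N.tact a q) := rfl

lemma Nword_append (x y : List A) (q : ∀ v, Q v) :
    N.Nword (x ++ y) q = N.Nword x q + N.Nword y (N.tword x q) := by
  induction x generalizing q with
  | nil => rw [List.nil_append, Nword_nil, zero_add]; rfl
  | cons a x ih => rw [List.cons_append, Nword_cons, Nword_cons, ih, tword_cons, add_assoc]

lemma tact_apply_of_ne (a : A) (q : ∀ v, Q v) {v : V} (h : v ≠ N.loc a) :
    N.tact a q v = q v :=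
  Function.update_of_ne h _ _

lemma Nletter_congr (a : A) {q q' : ∀ v, Q v} (h : q (N.loc a) = q' (N.loc a)) :
    N.Nletter a q = N.Nletter a q' := by
  unfold Nletter
  rw [h]

lemma tword_pair_comm_of_loc_ne {a b : A} (hab : N.loc a ≠ N.loc b) (q : ∀ v, Q v) :
    N.tword [a, b] q = N.tword [b, a] q := by
  change N.tact b (N.tact a q) = N.tact a (N.tact b q)
  unfold tact
  rw [Function.update_of_ne hab.symm, Function.update_of_ne hab, Function.update_comm hab]

lemma Nword_pair_comm_of_loc_ne {a b : A} (hab : N.loc a ≠ N.loc b) (q : ∀ v, Q v) :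
    N.Nword [a, b] q = N.Nword [b, a] q := by
  simp only [Nword_cons, Nword_nil, add_zero]
  rw [N.Nletter_congr b (N.tact_apply_of_ne a q hab.symm),
    N.Nletter_congr a (N.tact_apply_of_ne b q hab), add_comm]

lemma Nword_eq_sum_count_msgword {v : V} {w : List A} (hw : ∀ a ∈ w, N.loc a = v)
    (q : ∀ u, Q u) (b : A) :
    N.Nword w q b = ∑ e ∈ N.outEdges v, (N.msgword e w q).count b := by
  induction w generalizing q with
  | nil => simp [Nword_nil, msgword]
  | cons a w ih =>
    obtain ⟨rfl, hw⟩ := List.forall_mem_cons.mp hw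
    rw [Nword_cons, Pi.add_apply, ih hw, Nletter, ← Finset.sum_add_distrib]
    refine Finset.sum_congr rfl fun e he => ?_
    simp [msgword, (N.mem_outEdges e _).mp he]

namespace IsAbelian

variable {N}

lemma tword_pair_comm (hN : N.IsAbelian) (a b : A) (q : ∀ v, Q v) :
    N.tword [a, b] q = N.tword [b, a] q := by
  by_cases hab : N.loc a = N.loc b
  · exact (hN (N.loc a) [a, b] [b, a] (by simp [hab]) (by simp [hab])
      (Multiset.coe_eq_coe.mpr (.swap b a [])) q).1
  · exact N.tword_pair_comm_of_loc_ne hab q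

lemma Nword_pair_comm (hN : N.IsAbelian) (a b : A) (q : ∀ v, Q v) :
    N.Nword [a, b] q = N.Nword [b, a] q := by
  by_cases hab : N.loc a = N.loc b
  · have hw : ∀ x ∈ [a, b], N.loc x = N.loc a := by simp [hab]
    have hw' : ∀ x ∈ [b, a], N.loc x = N.loc a := by simp [hab]
    have hmsg := (hN _ _ _ hw hw' (Multiset.coe_eq_coe.mpr (.swap b a [])) q).2
    funext c
    rw [N.Nword_eq_sum_count_msgword hw, N.Nword_eq_sum_count_msgword hw']
    exact Finset.sum_congr rfl fun e _ => (Multiset.coe_eq_coe.mp (hmsg e)).count_eq c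
  · exact N.Nword_pair_comm_of_loc_ne hab q

lemma Nword_perm (hN : N.IsAbelian) {w w' : List A} (hp : w.Perm w') (q : ∀ v, Q v) :
    N.Nword w q = N.Nword w' q := by
  induction hp generalizing q with
  | nil => rfl
  | cons a _ ih => rw [Nword_cons, Nword_cons, ih]
  | swap x y l =>
    change N.Nword ([y, x] ++ l) q = N.Nword ([x, y] ++ l) q
    rw [Nword_append, Nword_append, hN.tword_pair_comm, hN.Nword_pair_comm]
  | trans _ _ ih₁ ih₂ => exact (ih₁ q).trans (ih₂ q)

end IsAbelian

end AbelianNetwork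

/-- **Monotonicity (Lemma 3.1).** In an abelian network, if `|w| ≤ |w'|` coordinatewise in
`ℕ^A`, then `N(w,q) ≤ N(w',q)` coordinatewise in `ℕ^A`. -/
theorem AbelianNetwork.monotonicity {V E A : Type*} {Q : V → Type*}
    [DecidableEq V] [DecidableEq A] (N : AbelianNetwork V E A Q) (hN : N.IsAbelian)
    (w w' : List A) (q : ∀ v, Q v) (h : lc w ≤ lc w') :
    N.Nword w q ≤ N.Nword w' q := by
  have hperm : (w ++ w'.diff w).Perm w' :=
    List.subperm_append_diff_self_of_count_le fun a _ => h a
  rw [← hN.Nword_perm hperm, N.Nword_append]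
  exact fun b => Nat.le_add_right _ _
end

section
/- (Theorem 3.5, order-independence of abelian networks) Let N be an abelian network and fix an initial state x.q with x ∈ ℤ^A, q ∈ Q. If w and w' are both complete legal executions for x.q, then: |w| = |w'| in ℕ^A (so w and w' have the same length, the same number of letters processed at each vertex, and the same number of each letter processed), and the final states agree: t_w(q) = t_{w'}(q), hence π_w(x.q) = π_{w'}(x.q). -/
/-!
Processing two letters in either order gives the same network state: at a single vertex this is
the abelian property, at distinct vertices the two processors do not interact. Hence `π_w`
depends only on `|w|`. If `w` is legal and `w'` is complete from the same state, the first
letter `a` of `w` must occur in `w'`, since otherwise `x_a ≥ 1` could only grow along `w'`;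
moving it to the front of `w'` and inducting gives `|w| ≤ |w'|`. By symmetry `|w| = |w'|`.
-/

namespace AbelianNetwork

open List

variable {V E A : Type*} {Q : V → Type*} [DecidableEq V] [DecidableEq A]
variable {N : AbelianNetwork V E A Q}

theorem tact_comm_of_loc_ne {a b : A} (h : N.loc a ≠ N.loc b) (q : ∀ v, Q v) :
    N.tact b (N.tact a q) = N.tact a (N.tact b q) := by
  simp only [tact, Function.update_of_ne h, Function.update_of_ne h.symm]
  exact Function.update_comm h _ _ _

theorem Nletter_tact_of_loc_ne {a b : A} (h : N.loc b ≠ N.loc a) (q : ∀ v, Q v) :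
    N.Nletter b (N.tact a q) = N.Nletter b q := by
  unfold Nletter tact
  rw [Function.update_of_ne h]

theorem sum_count_msgword {v : V} {w : List A} (hw : ∀ a ∈ w, N.loc a = v) (q : ∀ v, Q v)
    (c : A) : ∑ e ∈ N.outEdges v, (N.msgword e w q).count c = N.Nword w q c := by
  induction w generalizing q with
  | nil => simp [msgword, Nword]
  | cons a w ih =>
    obtain rfl : N.loc a = v := hw a mem_cons_self
    have hsrc : ∀ e ∈ N.outEdges (N.loc a), N.src e = N.loc a := fun e he =>
      (N.mem_outEdges e _).1 he
    simp only [Nword, Nletter]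
    rw [← ih (fun b hb => hw b (mem_cons_of_mem a hb)), ← Finset.sum_add_distrib]
    refine Finset.sum_congr rfl fun e he => ?_
    simp only [msgword, if_pos (hsrc e he), List.count_append]

theorem IsAbelian.Nword_eq_of_perm (hN : N.IsAbelian) {v : V} {w w' : List A}
    (hw : ∀ a ∈ w, N.loc a = v) (hw' : ∀ a ∈ w', N.loc a = v) (hperm : w ~ w')
    (q : ∀ v, Q v) : N.Nword w q = N.Nword w' q := by
  have hmsg := (hN v w w' hw hw' (Multiset.coe_eq_coe.2 hperm) q).2
  funext c
  rw [← sum_count_msgword hw, ← sum_count_msgword hw']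
  exact Finset.sum_congr rfl fun e _ => by simpa using congrArg (Multiset.count c) (hmsg e)

theorem IsAbelian.tact_comm (hN : N.IsAbelian) (a b : A) (q : ∀ v, Q v) :
    N.tact b (N.tact a q) = N.tact a (N.tact b q) := by
  by_cases h : N.loc a = N.loc b
  · have hab : ∀ c ∈ [a, b], N.loc c = N.loc a := by simp [h]
    have hba : ∀ c ∈ [b, a], N.loc c = N.loc a := by simp [h]
    exact (hN _ _ _ hab hba (Multiset.coe_eq_coe.2 (Perm.swap b a [])) q).1
  · exact tact_comm_of_loc_ne h q

theorem IsAbelian.Nletter_add_comm (hN : N.IsAbelian) (a b : A) (q : ∀ v, Q v) :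
    N.Nletter a q + N.Nletter b (N.tact a q) = N.Nletter b q + N.Nletter a (N.tact b q) := by
  by_cases h : N.loc a = N.loc b
  · have hab : ∀ c ∈ [a, b], N.loc c = N.loc a := by simp [h]
    have hba : ∀ c ∈ [b, a], N.loc c = N.loc a := by simp [h]
    funext c
    simpa [Nword] using congrFun (hN.Nword_eq_of_perm hab hba (Perm.swap b a []) q) c
  · rw [Nletter_tact_of_loc_ne (Ne.symm h), Nletter_tact_of_loc_ne h, add_comm]

theorem IsAbelian.piLetter_comm (hN : N.IsAbelian) (a b : A) (s : (A → ℤ) × (∀ v, Q v)) :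
    N.piLetter b (N.piLetter a s) = N.piLetter a (N.piLetter b s) := by
  refine Prod.ext (funext fun c => ?_) (hN.tact_comm a b s.2)
  have hcount := congrFun (hN.Nletter_add_comm a b s.2) c
  simp only [piLetter, Pi.add_apply] at hcount ⊢
  split_ifs <;> omega

theorem IsAbelian.piWord_perm (hN : N.IsAbelian) {w w' : List A} (h : w ~ w')
    (s : (A → ℤ) × (∀ v, Q v)) : N.piWord w s = N.piWord w' s :=
  h.foldl_eq' (fun a _ b _ s => hN.piLetter_comm a b s) s

theorem snd_piWord (w : List A) (x : A → ℤ) (q : ∀ v, Q v) :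
    (N.piWord w (x, q)).2 = N.tword w q := by
  induction w generalizing x q with
  | nil => rfl
  | cons a w ih => exact ih _ (N.tact a q)

theorem fst_le_fst_piWord {a : A} {w : List A} (ha : a ∉ w) (s : (A → ℤ) × (∀ v, Q v)) :
    s.1 a ≤ (N.piWord w s).1 a := by
  induction w generalizing s with
  | nil => exact le_rfl
  | cons b w ih =>
    have hab : a ≠ b := fun h => ha (h ▸ mem_cons_self)
    calc s.1 a ≤ (N.piLetter b s).1 a := by simp [piLetter, hab]
      _ ≤ _ := ih (fun h => ha (mem_cons_of_mem b h)) _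

theorem mem_of_complete {a : A} {w : List A} {s : (A → ℤ) × (∀ v, Q v)}
    (ha : 1 ≤ s.1 a) (hw : N.Complete w s) : a ∈ w := by
  by_contra h
  have h₁ : s.1 a ≤ (N.piWord w s).1 a := fst_le_fst_piWord h s
  have h₂ := hw a
  omega

theorem IsAbelian.subperm_of_legal_of_complete (hN : N.IsAbelian) {w w' : List A}
    {s : (A → ℤ) × (∀ v, Q v)} (hw : N.Legal w s) (hw' : N.Complete w' s) : w <+~ w' := by
  induction w generalizing w' s with
  | nil => exact nil_subperm
  | cons a w ih =>
    obtain ⟨ha, hw⟩ := hw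
    have hperm : w' ~ a :: w'.erase a := perm_cons_erase (mem_of_complete ha hw')
    have hrest : N.Complete (w'.erase a) (N.piLetter a s) := fun c => by
      show (N.piWord (a :: w'.erase a) s).1 c ≤ 0
      rw [← hN.piWord_perm hperm]
      exact hw' c
    exact ((subperm_cons a).2 (ih hw hrest)).trans hperm.symm.subperm

end AbelianNetwork

/-- **Theorem 3.5 (order-independence of abelian networks).** If `w` and `w'` are both
complete legal executions for `x.q`, then `|w| = |w'|` in `ℕ^A` (so they have the same
length, the same number of letters processed at each vertex, and the same number of each
letter processed), and the final states agree: `t_w(q) = t_{w'}(q)`, hence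
`π_w(x.q) = π_{w'}(x.q)`. -/
theorem AbelianNetwork.order_independence {V E A : Type*} {Q : V → Type*}
    [DecidableEq V] [DecidableEq A] (N : AbelianNetwork V E A Q) (hN : N.IsAbelian)
    (x : A → ℤ) (q : ∀ v, Q v) (w w' : List A)
    (hwl : N.Legal w (x, q)) (hwc : N.Complete w (x, q))
    (hw'l : N.Legal w' (x, q)) (hw'c : N.Complete w' (x, q)) :
    lc w = lc w' ∧
    w.length = w'.length ∧
    (∀ v : V, w.countP (fun a => decide (N.loc a = v)) =
      w'.countP (fun a => decide (N.loc a = v))) ∧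
    N.tword w q = N.tword w' q ∧
    N.piWord w (x, q) = N.piWord w' (x, q) := by
  have hperm : w.Perm w' :=
    (hN.subperm_of_legal_of_complete hwl hw'c).antisymm (hN.subperm_of_legal_of_complete hw'l hwc)
  have hpi := hN.piWord_perm hperm (x, q)
  refine ⟨funext hperm.count_eq, hperm.length_eq, fun v => hperm.countP_eq _, ?_, hpi⟩
  simpa only [snd_piWord] using congrArg Prod.snd hpi
end

section
/- (Unique minimizer of the monotone integer program) Let A be a finite set, F : ℕ^A → ℕ^A nondecreasing, and c ∈ ℝ^A a vector with all coordinates strictly positive. If the feasible set S = {u ∈ ℕ^A : F(u) ≤ u} is nonempty, then the problem of minimizing cᵀu over u ∈ S has a unique minimizer, which is independent of c: it is the least element of S (the coordinatewise minimum of all feasible vectors). -/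
/-!
The coordinatewise infimum `u*` of the feasible set is feasible, as in Knaster–Tarski:
`F u* ≤ F u ≤ u` for every feasible `u`. A cost with positive weights is strictly monotone,
so a minimizer, which lies above `u*`, cannot lie strictly above it.
-/

open Finset

theorem isLeast_csInf_setOf_map_le {α : Type*} [ConditionallyCompleteLattice α] {F : α → α}
    (hF : Monotone F) (hne : ∃ u, F u ≤ u) (hbdd : BddBelow {u | F u ≤ u}) :
    IsLeast {u | F u ≤ u} (sInf {u | F u ≤ u}) := by
  have hle : ∀ u ∈ {u | F u ≤ u}, sInf {u | F u ≤ u} ≤ u := fun u hu => csInf_le hbdd hu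
  refine ⟨?_, hle⟩
  exact le_csInf hne fun u hu => (hF (hle u hu)).trans hu

theorem strictMono_sum_mul_natCast {A : Type*} [Fintype A] {c : A → ℝ} (hc : ∀ a, 0 < c a) :
    StrictMono fun u : A → ℕ => ∑ a, c a * (u a : ℝ) := by
  intro u v huv
  obtain ⟨hle, a, hlt⟩ := Pi.lt_def.mp huv
  refine sum_lt_sum (fun b _ => ?_) ⟨a, mem_univ a, ?_⟩
  · exact mul_le_mul_of_nonneg_left (by exact_mod_cast hle b) (hc b).le
  · exact mul_lt_mul_of_pos_left (by exact_mod_cast hlt) (hc a)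

theorem IsLeast.eq_of_forall_le_of_strictMono {α β : Type*} [PartialOrder α] [Preorder β]
    {S : Set α} {x u : α} {f : α → β} (hx : IsLeast S x) (hf : StrictMono f) (hu : u ∈ S)
    (hmin : ∀ v ∈ S, f u ≤ f v) : u = x := by
  rcases (hx.2 hu).lt_or_eq with hlt | heq
  · exact absurd (hmin x hx.1) (hf hlt).not_ge
  · exact heq.symm

/-- **Unique minimizer of the monotone integer program.** Let `A` be a finite set,
`F : ℕ^A → ℕ^A` nondecreasing, and `c ∈ ℝ^A` a vector with all coordinates strictly
positive.  If the feasible set `S = {u ∈ ℕ^A : F(u) ≤ u}` is nonempty, then the problem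
of minimizing `cᵀu` over `u ∈ S` has a unique minimizer, which is independent of `c`:
it is the least element of `S`. -/
theorem unique_minimizer {A : Type*} [Fintype A] (F : (A → ℕ) → (A → ℕ))
    (hF : Monotone F) (c : A → ℝ) (hc : ∀ a, 0 < c a)
    (hne : ∃ u : A → ℕ, F u ≤ u) :
    ∃ ustar : A → ℕ,
      (F ustar ≤ ustar ∧
        (∀ u : A → ℕ, F u ≤ u → ∑ a, c a * (ustar a : ℝ) ≤ ∑ a, c a * (u a : ℝ)) ∧
        (∀ u : A → ℕ, F u ≤ u → ustar ≤ u)) ∧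
      ∀ u : A → ℕ,
        (F u ≤ u ∧ ∀ v : A → ℕ, F v ≤ v → ∑ a, c a * (u a : ℝ) ≤ ∑ a, c a * (v a : ℝ)) →
        u = ustar := by
  have hleast := isLeast_csInf_setOf_map_le hF hne (OrderBot.bddBelow _)
  have hcost := strictMono_sum_mul_natCast hc
  refine ⟨_, ⟨hleast.1, fun u hu => hcost.monotone (hleast.2 hu), fun u hu => hleast.2 hu⟩, ?_⟩
  rintro u ⟨hu, hmin⟩
  exact hleast.eq_of_forall_le_of_strictMono hcost hu hmin
end
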